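/- Let β > 0 and suppose α = (α₁,…,α_q) with α_i > 0, ∑ α_i = 1, is a critical point of Φ_β(α) = −∑ α_i log α_i + (β/2)∑ α_i² subject to the constraint ∑ α_i = 1. Then there exists λ ∈ ℝ such that β·α_i − log α_i = 1 − λ for every i ∈ [q]; consequently the coordinates α_i take at most two distinct values, and if two distinct values occur, one lies in (0, 1/β) and the other in (1/β, 1). -/
import Mathlib


open Finset

/-- The mean-field free-energy functional of the Potts model. -/
noncomputable def Phi (q : ℕ) (β : ℝ) (α : Fin q → ℝ) : ℝ :=
  (∑ i, -(α i) * Real.log (α i)) + β/2 * ∑ i, (α i)^2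

lemma straddle (β : ℝ) (hβ : 0 < β) {a b : ℝ} (ha : 0 < a) (hab : a < b)
    (h : β * a - Real.log a = β * b - Real.log b) : a < 1/β ∧ 1/β < b := by
  have hb : 0 < b := ha.trans hab
  have hba : (1:ℝ) < b / a := (one_lt_div ha).2 hab
  have hlog : Real.log (b / a) = Real.log b - Real.log a :=
    Real.log_div hb.ne' ha.ne'
  constructor
  · by_contra hc
    push_neg at hc
    -- 1/β ≤ a, so 1/a ≤ β, and log (b/a) < b/a - 1 ≤ β (b - a)
    have h1 : Real.log (b/a) < b/a - 1 := Real.log_lt_sub_one_of_pos (by positivity) hba.ne'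
    have h2 : b/a - 1 = (b - a)/a := by field_simp
    have h3 : (b - a)/a ≤ β * (b - a) := by
      rw [div_le_iff₀ ha]
      have h1a : 1 ≤ β * a := by
        rw [div_le_iff₀ hβ] at hc
        nlinarith [hc]
      nlinarith [sub_pos.2 hab]
    rw [hlog] at h1
    rw [h2] at h1
    nlinarith
  · by_contra hc
    push_neg at hc
    -- b ≤ 1/β, so β ≤ 1/b, and log (b/a) > 1 - a/b ≥ β (b - a)
    have h1 : Real.log (a/b) < a/b - 1 := by
      refine Real.log_lt_sub_one_of_pos (by positivity) ?_
      exact ne_of_lt ((div_lt_one hb).2 hab)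
    have hlog2 : Real.log (a/b) = Real.log a - Real.log b := Real.log_div ha.ne' hb.ne'
    have h2 : Real.log (b/a) > 1 - a/b := by
      rw [hlog]; rw [hlog2] at h1; linarith
    have h3 : β * (b - a) ≤ 1 - a/b := by
      have hβb : β * b ≤ 1 := by
        rw [le_div_iff₀ hβ] at hc
        nlinarith [hc]
      have : 1 - a/b = (b - a)/b := by field_simp
      rw [this, le_div_iff₀ hb]
      nlinarith [sub_pos.2 hab]
    rw [hlog] at h2
    nlinarith

lemma side (β : ℝ) (hβ : 0 < β) {a b : ℝ} (ha : 0 < a) (hb : 0 < b) (hab : a ≠ b)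
    (h : β * a - Real.log a = β * b - Real.log b) :
    (a < 1/β ∧ 1/β < b) ∨ (b < 1/β ∧ 1/β < a) := by
  rcases lt_or_gt_of_ne hab with h' | h'
  · exact Or.inl (straddle β hβ ha h' h)
  · exact Or.inr (straddle β hβ hb h' h.symm)

lemma three_distinct (β : ℝ) (hβ : 0 < β) {x y z : ℝ} (hx : 0 < x) (hy : 0 < y) (hz : 0 < z)
    (hxy : x ≠ y) (hxz : x ≠ z) (hyz : y ≠ z)
    (h1 : β * x - Real.log x = β * y - Real.log y)
    (h2 : β * x - Real.log x = β * z - Real.log z) : False := by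
  have h3 : β * y - Real.log y = β * z - Real.log z := h1 ▸ h2
  rcases side β hβ hx hy hxy h1 with ⟨a1, a2⟩ | ⟨a1, a2⟩ <;>
    rcases side β hβ hx hz hxz h2 with ⟨b1, b2⟩ | ⟨b1, b2⟩ <;>
    rcases side β hβ hy hz hyz h3 with ⟨c1, c2⟩ | ⟨c1, c2⟩ <;> linarith

/-- Constrained critical points of `Φ_β` on the simplex satisfy a Lagrange condition:
`β α_i − log α_i = 1 − λ` for all `i`, so the coordinates take at most two distinct
values, and if two distinct values occur then one lies in `(0, 1/β)` and the other
in `(1/β, 1)`. -/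
theorem stmt10 (q : ℕ) (hq : 2 ≤ q) (β : ℝ) (hβ : 0 < β) (α : Fin q → ℝ)
    (hα : ∀ i, 0 < α i) (hsum : ∑ i, α i = 1)
    (hcrit : ∃ lam : ℝ, ∀ i,
      deriv (fun t => Phi q β (Function.update α i t)) (α i) = lam) :
    ∃ lam : ℝ, (∀ i, β * α i - Real.log (α i) = 1 - lam) ∧
      (∃ v₁ v₂ : ℝ, ∀ i, α i = v₁ ∨ α i = v₂) ∧
      ((∃ i j, α i ≠ α j) →
        ∃ v₁ v₂ : ℝ, v₁ ∈ Set.Ioo 0 (1/β) ∧ v₂ ∈ Set.Ioo (1/β) 1 ∧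
          ∀ i, α i = v₁ ∨ α i = v₂) := by
  obtain ⟨lam₀, hlam₀⟩ := hcrit
  -- derivative computation
  have key : ∀ i : Fin q, deriv (fun t => Phi q β (Function.update α i t)) (α i)
      = β * α i - Real.log (α i) - 1 := by
    intro i
    have hfe : (fun t => Phi q β (Function.update α i t)) =
        fun t => (-(t * Real.log t) + β/2 * t^2) +
          ((∑ j ∈ univ \ {i}, -(α j) * Real.log (α j)) +
           β/2 * ∑ j ∈ univ \ {i}, (α j)^2) := by
      funext t
      unfold Phi
      have e1 : (∑ j, -(Function.update α i t j) * Real.log (Function.update α i t j))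
          = -(t * Real.log t) + ∑ j ∈ univ \ {i}, -(α j) * Real.log (α j) := by
        have : (fun j => -(Function.update α i t j) * Real.log (Function.update α i t j))
            = Function.update (fun j => -(α j) * Real.log (α j)) i (-(t * Real.log t)) := by
          funext j
          simpa [neg_mul] using Function.apply_update (fun _ x => -(x * Real.log x)) α i t j
        rw [this, Finset.sum_update_of_mem (Finset.mem_univ i)]
      have e2 : (∑ j, (Function.update α i t j)^2)
          = t^2 + ∑ j ∈ univ \ {i}, (α j)^2 := by
        have : (fun j => (Function.update α i t j)^2)
            = Function.update (fun j => (α j)^2) i (t^2) := by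
          funext j
          exact Function.apply_update (fun _ x => x^2) α i t j
        rw [this, Finset.sum_update_of_mem (Finset.mem_univ i)]
      rw [e1, e2]
      ring
    rw [hfe]
    have hpos := hα i
    have hd : HasDerivAt (fun t : ℝ => (-(t * Real.log t) + β/2 * t^2) +
          ((∑ j ∈ univ \ {i}, -(α j) * Real.log (α j)) +
           β/2 * ∑ j ∈ univ \ {i}, (α j)^2))
        (β * α i - Real.log (α i) - 1) (α i) := by
      have h1 : HasDerivAt (fun t : ℝ => t * Real.log t) (Real.log (α i) + 1) (α i) :=
        Real.hasDerivAt_mul_log hpos.ne'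
      have h2 : HasDerivAt (fun t : ℝ => t^2) (2 * α i) (α i) := by
        simpa using hasDerivAt_pow 2 (α i)
      have h3 := (h1.neg.add (h2.const_mul (β/2))).add_const
        ((∑ j ∈ univ \ {i}, -(α j) * Real.log (α j)) +
           β/2 * ∑ j ∈ univ \ {i}, (α j)^2)
      have hv : β * α i - Real.log (α i) - 1 = -(Real.log (α i) + 1) + β/2 * (2 * α i) := by
        ring
      rw [hv]
      exact h3
    exact hd.deriv
  have hlag : ∀ i, β * α i - Real.log (α i) = 1 - (-lam₀) := by
    intro i
    have := hlam₀ i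
    rw [key i] at this
    linarith
  -- every coordinate is < 1
  haveI : Nontrivial (Fin q) := Fin.nontrivial_iff_two_le.mpr hq
  have hlt1 : ∀ i, α i < 1 := by
    intro i
    obtain ⟨j, hj⟩ := exists_ne i
    have : α i < ∑ k, α k := by
      refine Finset.single_lt_sum hj (mem_univ i) (mem_univ j) (hα j) ?_
      intro k _ _
      exact (hα k).le
    rwa [hsum] at this
  have hm : Nonempty (Fin q) := ⟨⟨0, by omega⟩⟩
  obtain ⟨i₀⟩ := hm
  have heq : ∀ i j : Fin q, β * α i - Real.log (α i) = β * α j - Real.log (α j) := by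
    intro i j; rw [hlag i, hlag j]
  refine ⟨-lam₀, hlag, ?_, ?_⟩
  · by_cases hall : ∀ i, α i = α i₀
    · exact ⟨α i₀, α i₀, fun i => Or.inl (hall i)⟩
    · push_neg at hall
      obtain ⟨j, hj⟩ := hall
      refine ⟨α i₀, α j, fun i => ?_⟩
      by_contra hc
      push_neg at hc
      exact three_distinct β hβ (hα i) (hα i₀) (hα j) hc.1 hc.2 (fun h => hj h.symm)
        (heq i i₀) (heq i j)
  · rintro ⟨i, j, hij⟩
    have hside := side β hβ (hα i) (hα j) hij (heq i j)
    -- get the two values ordered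
    obtain ⟨a, b, ha, hb, hab, h1, h2, hall⟩ :
        ∃ a b : Fin q, α a < 1/β ∧ 1/β < α b ∧ α a ≠ α b ∧ 0 < α a ∧ α b < 1 ∧
          (∀ k, α k = α a ∨ α k = α b) := by
      rcases hside with ⟨h1, h2⟩ | ⟨h1, h2⟩
      · refine ⟨i, j, h1, h2, hij, hα i, hlt1 j, fun k => ?_⟩
        by_contra hc
        push_neg at hc
        exact three_distinct β hβ (hα k) (hα i) (hα j) hc.1 hc.2 hij (heq k i) (heq k j)
      · refine ⟨j, i, h1, h2, hij.symm, hα j, hlt1 i, fun k => ?_⟩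
        by_contra hc
        push_neg at hc
        exact three_distinct β hβ (hα k) (hα j) (hα i) hc.1 hc.2 (fun h => hij h.symm)
          (heq k j) (heq k i)
    exact ⟨α a, α b, ⟨h1, ha⟩, ⟨hb, h2⟩, hall⟩
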